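/- Let e be a vital edge and C(e) a mincut for e. Then deleting all edges that enter C(e) (tail outside, head inside) does not change the capacity of the minimum (s,t)-cut. -/

import Mathlib

open Finset

variable {V : Type*} [Fintype V] [DecidableEq V]

/-- capacity of the cut given by the source-side vertex set `C`:
total capacity of edges with tail in `C` and head outside `C`. -/
noncomputable def cutCap (E : Finset (V × V)) (w : V × V → ℝ) (C : Finset V) : ℝ :=
  ∑ e ∈ E.filter (fun e => e.1 ∈ C ∧ e.2 ∉ C), w e

/-- `C` is an (s,t)-cut. -/
def IsCut (s t : V) (C : Finset V) : Prop := s ∈ C ∧ t ∉ C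

/-- edge `e` is a contributing (outgoing) edge of the cut `C`. -/
def Contributes (e : V × V) (C : Finset V) : Prop := e.1 ∈ C ∧ e.2 ∉ C

/-- `f` is a feasible (s,t)-flow on edge set `E` with capacities `w`. -/
structure IsFlow (E : Finset (V × V)) (w : V × V → ℝ) (s t : V) (f : V × V → ℝ) : Prop where
  nonneg : ∀ e ∈ E, 0 ≤ f e
  le_cap : ∀ e ∈ E, f e ≤ w e
  support : ∀ e, e ∉ E → f e = 0
  conserve : ∀ v, v ≠ s → v ≠ t →
    ∑ e ∈ E.filter (fun e => e.1 = v), f e = ∑ e ∈ E.filter (fun e => e.2 = v), f e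

/-- value of an (s,t)-flow: the net flow out of `s`. -/
noncomputable def flowValue (E : Finset (V × V)) (s : V) (f : V × V → ℝ) : ℝ :=
  ∑ e ∈ E.filter (fun e => e.1 = s), f e - ∑ e ∈ E.filter (fun e => e.2 = s), f e

/-- `f` is a maximum (s,t)-flow. -/
def IsMaxFlow (E : Finset (V × V)) (w : V × V → ℝ) (s t : V) (f : V × V → ℝ) : Prop :=
  IsFlow E w s t f ∧ ∀ g, IsFlow E w s t g → flowValue E s g ≤ flowValue E s f

/-- capacity of a minimum (s,t)-cut. -/
noncomputable def minCutCap (E : Finset (V × V)) (w : V × V → ℝ) (s t : V) : ℝ :=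
  sInf {x | ∃ C : Finset V, IsCut s t C ∧ cutCap E w C = x}

/-- `e` is a vital edge: deleting it strictly decreases the min (s,t)-cut capacity. -/
def Vital (E : Finset (V × V)) (w : V × V → ℝ) (s t : V) (e : V × V) : Prop :=
  e ∈ E ∧ minCutCap (E.erase e) w s t < minCutCap E w s t

/-- `C` is a mincut for the edge `e`: a least-capacity (s,t)-cut in which `e` contributes. -/
def IsMincutFor (E : Finset (V × V)) (w : V × V → ℝ) (s t : V) (e : V × V)
    (C : Finset V) : Prop :=
  IsCut s t C ∧ Contributes e C ∧
    ∀ C', IsCut s t C' → Contributes e C' → cutCap E w C ≤ cutCap E w C'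

/-- total flow on edges leaving the cut `C`. -/
noncomputable def flowOut (E : Finset (V × V)) (f : V × V → ℝ) (C : Finset V) : ℝ :=
  ∑ e ∈ E.filter (fun e => e.1 ∈ C ∧ e.2 ∉ C), f e

/-- total flow on edges entering the cut `C`. -/
noncomputable def flowIn (E : Finset (V × V)) (f : V × V → ℝ) (C : Finset V) : ℝ :=
  ∑ e ∈ E.filter (fun e => e.1 ∉ C ∧ e.2 ∈ C), f e

/-!
Write `E'` for `E` without the edges entering `C`, and `m` for the min-cut capacity of `E`.
Deleting edges can only lower `m`. Conversely, for an (s,t)-cut `D`, submodularity reads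
`cap (D ∩ C) + cap (D ∪ C) + X = cap_{E'} D + cap C`, where `X` is the weight of the edges from
`C \ D` to `D \ C`: the edges from `D \ C` to `C \ D` are exactly those missing from `E'`.
If `e` leaves `D ∩ C` or `D ∪ C`, minimality of `C` among cuts with `e` contributing bounds
`cap C` by that cut, and the other one is at least `m`. Otherwise `e` runs from `C \ D` to
`D \ C`, so `w e ≤ X`, and vitality of `e` gives `cap C ≤ m + w e`. Either way `m ≤ cap_{E'} D`.
-/

def dropIncoming (E : Finset (V × V)) (C : Finset V) : Finset (V × V) :=
  E.filter fun g => ¬(g.1 ∉ C ∧ g.2 ∈ C)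

section Cuts

variable {E : Finset (V × V)} {w : V × V → ℝ} {s t : V} {e : V × V} {C D : Finset V}

omit [Fintype V] in
lemma IsCut.inter (hC : IsCut s t C) (hD : IsCut s t D) : IsCut s t (D ∩ C) :=
  ⟨mem_inter.mpr ⟨hD.1, hC.1⟩, fun h => hD.2 (mem_inter.mp h).1⟩

omit [Fintype V] in
lemma IsCut.union (hC : IsCut s t C) (hD : IsCut s t D) : IsCut s t (D ∪ C) :=
  ⟨mem_union_left _ hD.1, fun h => (mem_union.mp h).elim hD.2 hC.2⟩

omit [Fintype V] in
lemma cutCap_mono {E' : Finset (V × V)} (hE : E' ⊆ E) (hw : ∀ g ∈ E, 0 ≤ w g) (C : Finset V) :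
    cutCap E' w C ≤ cutCap E w C :=
  sum_le_sum_of_subset_of_nonneg (filter_subset_filter _ hE) fun g hg _ => hw g (mem_filter.mp hg).1

omit [Fintype V] in
lemma cutCap_erase_add (he : e ∈ E) (hD : Contributes e D) :
    cutCap (E.erase e) w D + w e = cutCap E w D := by
  rw [cutCap, cutCap, filter_erase]
  exact sum_erase_add _ _ (mem_filter.mpr ⟨he, hD⟩)

omit [Fintype V] in
lemma cutCap_erase_of_not_contributes (hD : ¬Contributes e D) :
    cutCap (E.erase e) w D = cutCap E w D := by
  rw [cutCap, cutCap, filter_erase, erase_eq_of_notMem (a := e) fun h => hD (mem_filter.mp h).2]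

omit [Fintype V] in
lemma cutCap_inter_add_cutCap_union (E : Finset (V × V)) (w : V × V → ℝ) (C D : Finset V) :
    cutCap E w (D ∩ C) + cutCap E w (D ∪ C) + ∑ g ∈ E with g.1 ∈ C \ D ∧ g.2 ∈ D \ C, w g
      = cutCap (dropIncoming E C) w D + cutCap E w C := by
  simp only [cutCap, dropIncoming, filter_filter, sum_filter, ← sum_add_distrib]
  refine sum_congr rfl fun g _ => ?_
  by_cases g.1 ∈ C <;> by_cases g.1 ∈ D <;> by_cases g.2 ∈ C <;> by_cases g.2 ∈ D <;>
    simp_all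

lemma finite_cutCaps (E : Finset (V × V)) (w : V × V → ℝ) (s t : V) :
    {x | ∃ C : Finset V, IsCut s t C ∧ cutCap E w C = x}.Finite :=
  (Set.finite_range (cutCap E w)).subset fun _ ⟨C, _, hC⟩ => ⟨C, hC⟩

lemma minCutCap_le_cutCap (hC : IsCut s t C) : minCutCap E w s t ≤ cutCap E w C :=
  csInf_le (finite_cutCaps E w s t).bddBelow ⟨C, hC, rfl⟩

lemma exists_cutCap_eq_minCutCap (hst : s ≠ t) :
    ∃ C, IsCut s t C ∧ cutCap E w C = minCutCap E w s t := by
  refine Set.Nonempty.csInf_mem ?_ (finite_cutCaps E w s t)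
  exact ⟨_, {s}, ⟨mem_singleton_self s, by simpa using hst.symm⟩, rfl⟩

lemma minCutCap_mono {E' : Finset (V × V)} (hst : s ≠ t) (hE : E' ⊆ E) (hw : ∀ g ∈ E, 0 ≤ w g) :
    minCutCap E' w s t ≤ minCutCap E w s t := by
  obtain ⟨D, hD, hDmin⟩ := exists_cutCap_eq_minCutCap (E := E) (w := w) hst
  exact hDmin ▸ (minCutCap_le_cutCap hD).trans (cutCap_mono hE hw D)

lemma IsMincutFor.cutCap_le_minCutCap_add (hst : s ≠ t) (hC : IsMincutFor E w s t e C)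
    (hvit : Vital E w s t e) : cutCap E w C ≤ minCutCap E w s t + w e := by
  obtain ⟨D, hD, hDmin⟩ := exists_cutCap_eq_minCutCap (E := E.erase e) (w := w) hst
  by_cases he : Contributes e D
  · calc cutCap E w C ≤ cutCap E w D := hC.2.2 D hD he
      _ = minCutCap (E.erase e) w s t + w e := by rw [← cutCap_erase_add hvit.1 he, hDmin]
      _ ≤ minCutCap E w s t + w e := by linarith [hvit.2]
  · have := minCutCap_le_cutCap (E := E) (w := w) hD
    rw [← cutCap_erase_of_not_contributes he, hDmin] at this
    exact absurd hvit.2 this.not_gt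

lemma IsMincutFor.minCutCap_le_cutCap_dropIncoming (hw : ∀ g ∈ E, 0 ≤ w g) (he : e ∈ E)
    (hC : IsMincutFor E w s t e C) (hCe : cutCap E w C ≤ minCutCap E w s t + w e)
    (hD : IsCut s t D) : minCutCap E w s t ≤ cutCap (dropIncoming E C) w D := by
  obtain ⟨hCcut, ⟨he1, he2⟩, hCmin⟩ := hC
  have hsub := cutCap_inter_add_cutCap_union E w C D
  have hinter := minCutCap_le_cutCap (E := E) (w := w) (hCcut.inter hD)
  have hunion := minCutCap_le_cutCap (E := E) (w := w) (hCcut.union hD)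
  have hcross : 0 ≤ ∑ g ∈ E with g.1 ∈ C \ D ∧ g.2 ∈ D \ C, w g :=
    sum_nonneg fun g hg => hw g (mem_filter.mp hg).1
  by_cases h1 : e.1 ∈ D
  · have := hCmin _ (hCcut.inter hD) ⟨mem_inter.mpr ⟨h1, he1⟩, fun h => he2 (mem_inter.mp h).2⟩
    linarith
  by_cases h2 : e.2 ∈ D
  · have : w e ≤ ∑ g ∈ E with g.1 ∈ C \ D ∧ g.2 ∈ D \ C, w g :=
      single_le_sum (fun g hg => hw g (mem_filter.mp hg).1)
        (mem_filter.mpr ⟨he, mem_sdiff.mpr ⟨he1, h1⟩, mem_sdiff.mpr ⟨h2, he2⟩⟩)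
    linarith
  · have := hCmin _ (hCcut.union hD) ⟨mem_union_right _ he1, fun h => (mem_union.mp h).elim h2 he2⟩
    linarith

end Cuts

/-- deleting all edges entering a mincut for a vital edge does not change the
capacity of the minimum (s,t)-cut. -/
theorem removing_incoming_edges_preserves_minCutCap (E : Finset (V × V)) (w : V × V → ℝ)
    (s t : V) (hst : s ≠ t) (hpos : ∀ e ∈ E, 0 < w e) (e : V × V)
    (hvit : Vital E w s t e) (C : Finset V) (hC : IsMincutFor E w s t e C) :
    minCutCap (E.filter (fun e' => ¬ (e'.1 ∉ C ∧ e'.2 ∈ C))) w s t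
      = minCutCap E w s t := by
  have hw : ∀ g ∈ E, 0 ≤ w g := fun g hg => (hpos g hg).le
  refine le_antisymm (minCutCap_mono hst (filter_subset _ E) hw) ?_
  obtain ⟨D, hD, hDmin⟩ := exists_cutCap_eq_minCutCap (E := dropIncoming E C) (w := w) hst
  rw [← dropIncoming, ← hDmin]
  exact hC.minCutCap_le_cutCap_dropIncoming hw hvit.1 (hC.cutCap_le_minCutCap_add hst hvit) hD
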